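/- (Aharoni–Alon–Berger) Let k ≥ 2 and ℓ ≥ 2 be integers and let G be a finite simple graph with maximum degree at most k containing no induced copy of K_{1,ℓ}. Let t(k,ℓ) denote the minimum possible number of edges of a graph on k vertices with no stable (independent) set of size ℓ. If θ is the largest eigenvalue of the Laplacian matrix L(G) = Δ(G) - A(G), then θ ≤ 2k - t(k,ℓ)/(k-1). -/

import Mathlib

open scoped Classical

/-- The adjacency matrix of a simple graph, over `ℝ`. -/
noncomputable def adjMat {V : Type*} [Fintype V] (G : SimpleGraph V) : Matrix V V ℝ :=
  Matrix.of fun i j => if G.Adj i j then (1 : ℝ) else 0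

/-- The smallest (real) eigenvalue of a matrix. -/
noncomputable def matMinEig {V : Type*} [Fintype V] (A : Matrix V V ℝ) : ℝ :=
  sInf {μ : ℝ | ∃ v : V → ℝ, v ≠ 0 ∧ A.mulVec v = μ • v}

/-- The smallest eigenvalue of a graph. -/
noncomputable def minEig {V : Type*} [Fintype V] (G : SimpleGraph V) : ℝ :=
  matMinEig (adjMat G)

/-- The degree (valency) of a vertex. -/
noncomputable def deg {V : Type*} [Fintype V] (G : SimpleGraph V) (v : V) : ℕ :=
  (G.neighborSet v).ncard
/-- The largest (real) eigenvalue of a matrix. -/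
noncomputable def matMaxEig {V : Type*} [Fintype V] (A : Matrix V V ℝ) : ℝ :=
  sSup {μ : ℝ | ∃ v : V → ℝ, v ≠ 0 ∧ A.mulVec v = μ • v}

/-- The Laplacian matrix `L(G) = Δ(G) - A(G)`. -/
noncomputable def lapMat {V : Type*} [Fintype V] [DecidableEq V] (G : SimpleGraph V) :
    Matrix V V ℝ :=
  Matrix.diagonal (fun v => (deg G v : ℝ)) - adjMat G

/-- The star `K_{1,t}`. -/
def starG (t : ℕ) : SimpleGraph (Fin (t + 1)) :=
  SimpleGraph.fromRel (fun x _ => x = 0)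

/-!
For an eigenvector `x` of `L(G)` with eigenvalue `μ`, summing over ordered adjacent pairs,
`2μ‖x‖² = ∑ (xᵢ - xⱼ)² = 4 ∑ dᵢ xᵢ² - ∑ (xᵢ + xⱼ)²`, so it suffices to bound `∑ (xᵢ + xⱼ)²`
from below. Summing `(a + b)² + (b + c)² + (c + a)² ≥ a² + b² + c²` over the triangles of `G`,
and using that an edge lies in at most `k - 1` triangles, gives
`∑_w τ_w x_w² ≤ (k - 1) ∑ (xᵢ + xⱼ)²`, where `τ_w` is twice the number of edges inside the
neighbourhood `N(w)`. As `G` has no induced `K_{1,ℓ}`, `N(w)` has no stable set of size `ℓ`, and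
neither does the graph on `k` vertices obtained by adding `k - d_w` vertices adjacent to
everything; counting its edges gives `τ_w ≥ 2t - 2(k - d_w)(k - 1)`. Together with `dᵢ ≤ k`
this yields `(k - 1) μ ≤ 2k(k - 1) - t`.
-/

open Finset
open scoped Matrix

namespace SimpleGraph

-- `(Hᶜ.map φ)ᶜ` is the join of `H` with a clique on the vertices outside the range of `φ`.
theorem IndepSetFree.compl_map_compl {W U : Type*} {H : SimpleGraph W} {l : ℕ}
    (h : H.IndepSetFree l) (hl : 1 < l) (φ : W ↪ U) : ((Hᶜ.map φ)ᶜ).IndepSetFree l := by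
  rw [indepSetFree_compl]
  intro s hs
  obtain ⟨s', hs', -⟩ := (isNClique_map_iff hl).1 hs
  exact h s' ((isNClique_compl _).1 hs')

variable {W U : Type*} [Fintype W] [Fintype U]

theorem ncard_edgeSet_add_ncard_edgeSet_compl (H : SimpleGraph W) :
    H.edgeSet.ncard + Hᶜ.edgeSet.ncard = (Fintype.card W).choose 2 := by
  classical
  rw [← Set.ncard_union_eq (disjoint_edgeSet.2 disjoint_compl_right), ← edgeSet_sup,
    sup_compl_eq_top, ← coe_edgeFinset, Set.ncard_coe_finset,
    card_edgeFinset_top_eq_card_choose_two]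

theorem ncard_edgeSet_compl_map_compl (H : SimpleGraph W) (φ : W ↪ U) :
    ((Hᶜ.map φ)ᶜ).edgeSet.ncard + (Fintype.card W).choose 2 =
      H.edgeSet.ncard + (Fintype.card U).choose 2 := by
  have hU := ncard_edgeSet_add_ncard_edgeSet_compl (Hᶜ.map φ)
  have hW := ncard_edgeSet_add_ncard_edgeSet_compl H
  rw [edgeSet_map, Set.ncard_image_of_injective _ φ.sym2Map.injective] at hU
  omega

end SimpleGraph

theorem sum_sum_sum_cycle {V M : Type*} [Fintype V] [AddCommMonoid M]
    (f : V → V → V → M) : ∑ i, ∑ j, ∑ w, f i j w = ∑ i, ∑ j, ∑ w, f j w i := by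
  conv_rhs => rw [Finset.sum_comm]; enter [2, j]; rw [Finset.sum_comm]

theorem sum_mul_sq_le_sum_mul_add_sq_of_cyclic {V : Type*} [Fintype V] (F : V → V → V → ℝ)
    (hF : ∀ i j w, 0 ≤ F i j w) (hcyc : ∀ i j w, F j w i = F i j w) (x : V → ℝ) :
    ∑ i, ∑ j, ∑ w, F i j w * x i ^ 2 ≤ ∑ i, ∑ j, ∑ w, F i j w * (x i + x j) ^ 2 := by
  have rot : ∀ g : V → V → V → ℝ,
      ∑ i, ∑ j, ∑ w, F i j w * g i j w = ∑ i, ∑ j, ∑ w, F i j w * g j w i := by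
    intro g
    rw [sum_sum_sum_cycle]
    simp_rw [hcyc]
  have hU₁ := rot fun i _ _ => x i ^ 2
  have hU₂ := rot fun _ j _ => x j ^ 2
  have hT₁ := rot fun i j _ => (x i + x j) ^ 2
  have hT₂ := rot fun _ j w => (x j + x w) ^ 2
  -- `(a + b)² + (b + c)² + (c + a)² = a² + b² + c² + (a + b + c)²`
  have key : ∑ i, ∑ j, ∑ w, F i j w * (x i ^ 2 + x j ^ 2 + x w ^ 2) ≤
      ∑ i, ∑ j, ∑ w, F i j w * ((x i + x j) ^ 2 + (x j + x w) ^ 2 + (x w + x i) ^ 2) := by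
    refine sum_le_sum fun i _ => sum_le_sum fun j _ => sum_le_sum fun w _ =>
      mul_le_mul_of_nonneg_left ?_ (hF i j w)
    nlinarith [sq_nonneg (x i + x j + x w)]
  simp only [mul_add, sum_add_distrib] at key
  linarith

noncomputable def minEdgesNoStableSet (k l : ℕ) : ℕ :=
  sInf {m : ℕ | ∃ H : SimpleGraph (Fin k), H.edgeSet.ncard = m ∧
    ¬ ∃ s : Finset (Fin k), s.card = l ∧ (∀ x ∈ s, ∀ y ∈ s, x ≠ y → ¬ H.Adj x y)}

theorem minEdgesNoStableSet_le {k l : ℕ} {H : SimpleGraph (Fin k)} (hH : H.IndepSetFree l) :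
    minEdgesNoStableSet k l ≤ H.edgeSet.ncard := by
  refine Nat.sInf_le ⟨H, rfl, ?_⟩
  rintro ⟨s, hs, hind⟩
  exact hH s ⟨fun x hx y hy hxy => hind x hx y hy hxy, hs⟩

theorem minEdgesNoStableSet_le_choose_two {k l : ℕ} (hl : 1 < l) :
    minEdgesNoStableSet k l ≤ k.choose 2 := by
  have htop : (⊤ : SimpleGraph (Fin k)).IndepSetFree l := by
    rw [← compl_bot, SimpleGraph.indepSetFree_compl]
    exact SimpleGraph.cliqueFree_bot hl
  have := minEdgesNoStableSet_le htop
  rwa [← SimpleGraph.coe_edgeFinset, Set.ncard_coe_finset,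
    SimpleGraph.card_edgeFinset_top_eq_card_choose_two, Fintype.card_fin] at this

theorem nonempty_starG_embedding {V : Type*} (G : SimpleGraph V) {l : ℕ} {c : V}
    {g : Fin l → V} (hg : Function.Injective g) (hadj : ∀ i, G.Adj c (g i))
    (hind : ∀ i j, ¬ G.Adj (g i) (g j)) : Nonempty (starG l ↪g G) := by
  refine ⟨⟨⟨Fin.cons c g, Fin.cons_injective_iff.2 ⟨?_, hg⟩⟩, ?_⟩⟩
  · rintro ⟨i, hi⟩
    exact G.irrefl (hi ▸ hadj i)
  · intro a b
    cases a using Fin.cases <;> cases b using Fin.cases <;>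
      simp [starG, hadj, hind, Fin.succ_ne_zero, (Fin.succ_ne_zero _).symm, G.adj_comm]

theorem indepSetFree_induce_neighborSet {V : Type*} (G : SimpleGraph V) {l : ℕ}
    (hstar : IsEmpty (starG l ↪g G)) (w : V) :
    (G.induce (G.neighborSet w)).IndepSetFree l := by
  intro s hs
  let e := s.equivFinOfCardEq hs.card_eq
  refine hstar.false (nonempty_starG_embedding G (c := w)
    (g := fun i => ((e.symm i : G.neighborSet w) : V)) ?_ (fun i => (e.symm i).1.2) ?_).some
  · exact Subtype.val_injective.comp (Subtype.val_injective.comp e.symm.injective)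
  · intro i j h
    obtain rfl | hij := eq_or_ne i j
    · exact G.irrefl h
    · exact hs.isIndepSet (e.symm i).2 (e.symm j).2
        (fun h' => hij (e.symm.injective (Subtype.val_injective h'))) h

section AdjacencyMatrix

variable {V : Type*} [Fintype V] (G : SimpleGraph V)

theorem deg_eq_degree (v : V) : deg G v = G.degree v := by
  rw [deg, Set.ncard_eq_toFinset_card', SimpleGraph.degree, SimpleGraph.neighborFinset_def]

theorem adjMat_comm (i j : V) : adjMat G i j = adjMat G j i := by
  simp [adjMat, G.adj_comm]

theorem adjMat_nonneg (i j : V) : 0 ≤ adjMat G i j := by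
  simp only [adjMat, Matrix.of_apply]
  split_ifs <;> norm_num

theorem sum_adjMat_row (i : V) : ∑ j, adjMat G i j = G.degree i := by
  rw [G.degree_eq_sum_if_adj]
  rfl

theorem sum_neighborSet_eq_sum_adjMat_mul (w : V) (f : V → ℝ) :
    ∑ a : G.neighborSet w, f a = ∑ a, adjMat G w a * f a := by
  rw [← Finset.sum_subtype (univ.filter (G.Adj w)) (by simp), Finset.sum_filter]
  simp [adjMat]

theorem sum_adjMat_triangle_eq (w : V) :
    ∑ j, ∑ u, adjMat G w j * adjMat G j u * adjMat G u w =
      2 * (G.induce (G.neighborSet w)).edgeSet.ncard := by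
  have hdeg : ∀ a : G.neighborSet w,
      ((G.induce (G.neighborSet w)).degree a : ℝ) = ∑ b : G.neighborSet w, adjMat G a b := by
    intro a
    rw [SimpleGraph.degree_eq_sum_if_adj]
    simp [adjMat]
  have hsum := congrArg (Nat.cast : ℕ → ℝ)
    (G.induce (G.neighborSet w)).sum_degrees_eq_twice_card_edges
  push_cast at hsum
  rw [← SimpleGraph.coe_edgeFinset, Set.ncard_coe_finset, ← hsum]
  simp_rw [hdeg]
  rw [sum_neighborSet_eq_sum_adjMat_mul G w (fun a => ∑ b : G.neighborSet w, adjMat G a b)]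
  simp only [sum_neighborSet_eq_sum_adjMat_mul G w (adjMat G _), mul_sum]
  refine sum_congr rfl fun j _ => sum_congr rfl fun u _ => ?_
  rw [adjMat_comm G u w]
  ring

theorem minEdgesNoStableSet_le_ncard_edgeSet_induce_neighborSet {k l : ℕ} (hl : 1 < l)
    (hstar : IsEmpty (starG l ↪g G)) {w : V} (hw : G.degree w ≤ k) :
    (minEdgesNoStableSet k l : ℝ) ≤ (G.induce (G.neighborSet w)).edgeSet.ncard +
      ((k : ℝ) - G.degree w) * ((k : ℝ) - 1) := by
  have hcard : Fintype.card (G.neighborSet w) = G.degree w := G.card_neighborSet_eq_degree w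
  obtain ⟨φ⟩ : Nonempty (G.neighborSet w ↪ Fin k) :=
    Function.Embedding.nonempty_of_card_le (by rwa [hcard, Fintype.card_fin])
  have ht := minEdgesNoStableSet_le
    ((indepSetFree_induce_neighborSet G hstar w).compl_map_compl hl φ)
  have hcount := SimpleGraph.ncard_edgeSet_compl_map_compl (G.induce (G.neighborSet w)) φ
  rw [hcard, Fintype.card_fin] at hcount
  have hreal : (minEdgesNoStableSet k l : ℝ) + (G.degree w).choose 2 ≤
      (G.induce (G.neighborSet w)).edgeSet.ncard + k.choose 2 := by
    exact_mod_cast (by omega)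
  rw [Nat.cast_choose_two, Nat.cast_choose_two] at hreal
  -- `k.choose 2 - d.choose 2 ≤ (k - d) * (k - 1)` for naturals `d ≤ k`
  have hgap : 0 ≤ ((k : ℝ) - G.degree w) * ((k : ℝ) - G.degree w - 1) := by
    rcases hw.eq_or_lt with heq | hlt
    · simp [heq]
    · have : (G.degree w : ℝ) + 1 ≤ k := by exact_mod_cast hlt
      nlinarith
  nlinarith

theorem lapMat_eq_lapMatrix [DecidableEq V] : lapMat G = G.lapMatrix ℝ := by
  ext i j
  simp [lapMat, SimpleGraph.lapMatrix, SimpleGraph.degMatrix, deg_eq_degree, adjMat,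
    SimpleGraph.adjMatrix_apply]

theorem two_mul_eigenvalue_mul_sum_sq [DecidableEq V] {μ : ℝ} {x : V → ℝ}
    (hμ : lapMat G *ᵥ x = μ • x) :
    2 * μ * ∑ i, x i ^ 2 = ∑ i, ∑ j, adjMat G i j * (x i - x j) ^ 2 := by
  have h := G.lapMatrix_toLinearMap₂' ℝ x
  rw [Matrix.toLinearMap₂'_apply', ← lapMat_eq_lapMatrix, hμ] at h
  simp only [dotProduct, Pi.smul_apply, smul_eq_mul] at h
  simp only [adjMat, Matrix.of_apply, ite_mul, one_mul, zero_mul]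
  rw [← mul_div_cancel₀ (∑ i, ∑ j, _) (two_ne_zero' ℝ), ← h, mul_sum, mul_sum]
  refine sum_congr rfl fun i _ => ?_
  ring

theorem sum_adjMat_mul_sub_sq_add_sum_adjMat_mul_add_sq (x : V → ℝ) :
    ∑ i, ∑ j, adjMat G i j * (x i - x j) ^ 2 + ∑ i, ∑ j, adjMat G i j * (x i + x j) ^ 2 =
      4 * ∑ i, (G.degree i : ℝ) * x i ^ 2 := by
  have hrow : ∑ i, ∑ j, adjMat G i j * x i ^ 2 = ∑ i, (G.degree i : ℝ) * x i ^ 2 := by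
    simp_rw [← sum_mul, sum_adjMat_row]
  have hcol : ∑ i, ∑ j, adjMat G i j * x j ^ 2 = ∑ i, (G.degree i : ℝ) * x i ^ 2 := by
    rw [sum_comm, ← hrow]
    simp_rw [adjMat_comm G _ (_ : V)]
  calc _ = ∑ i, ∑ j, (2 * (adjMat G i j * x i ^ 2) + 2 * (adjMat G i j * x j ^ 2)) := by
        rw [← sum_add_distrib]
        refine sum_congr rfl fun i _ => ?_
        rw [← sum_add_distrib]
        refine sum_congr rfl fun j _ => ?_
        ring
    _ = _ := by
        simp only [sum_add_distrib, ← mul_sum, hrow, hcol]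
        ring

theorem sum_adjMat_mul_adjMat_le {i j : V} (h : G.Adj i j) :
    ∑ w, adjMat G i w * adjMat G w j ≤ G.degree i - 1 := by
  calc ∑ w, adjMat G i w * adjMat G w j
      ≤ ∑ w, adjMat G i w * (1 - if w = j then 1 else 0) := by
        gcongr with w
        · exact adjMat_nonneg G i w
        · by_cases hw : w = j <;> simp [adjMat, hw]
          split_ifs <;> norm_num
    _ = G.degree i - 1 := by
        simp only [mul_sub, mul_one, sum_sub_distrib, mul_ite, mul_zero, sum_ite_eq', mem_univ,
          if_true, sum_adjMat_row]
        simp [adjMat, h]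

theorem sum_triangle_mul_sq_le {k : ℕ} (hdeg : ∀ v, G.degree v ≤ k) (x : V → ℝ) :
    ∑ i, (∑ j, ∑ w, adjMat G i j * adjMat G j w * adjMat G w i) * x i ^ 2 ≤
      ((k : ℝ) - 1) * ∑ i, ∑ j, adjMat G i j * (x i + x j) ^ 2 := by
  set F : V → V → V → ℝ := fun i j w => adjMat G i j * adjMat G j w * adjMat G w i
  have hF : ∀ i j w, 0 ≤ F i j w := fun i j w =>
    mul_nonneg (mul_nonneg (adjMat_nonneg G i j) (adjMat_nonneg G j w)) (adjMat_nonneg G w i)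
  calc _ = ∑ i, ∑ j, ∑ w, F i j w * x i ^ 2 := by simp only [F, sum_mul]
    _ ≤ ∑ i, ∑ j, ∑ w, F i j w * (x i + x j) ^ 2 :=
        sum_mul_sq_le_sum_mul_add_sq_of_cyclic F hF (fun i j w => by simp only [F]; ring) x
    _ = ∑ i, ∑ j, (∑ w, adjMat G j w * adjMat G w i) * (adjMat G i j * (x i + x j) ^ 2) := by
        simp_rw [sum_mul]
        refine sum_congr rfl fun i _ => sum_congr rfl fun j _ => sum_congr rfl fun w _ => ?_
        ring
    _ ≤ ∑ i, ∑ j, ((k : ℝ) - 1) * (adjMat G i j * (x i + x j) ^ 2) := by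
        refine sum_le_sum fun i _ => sum_le_sum fun j _ => ?_
        by_cases h : G.Adj i j
        · have hk : (G.degree j : ℝ) ≤ k := by exact_mod_cast hdeg j
          refine mul_le_mul_of_nonneg_right ?_ (mul_nonneg (adjMat_nonneg G i j) (sq_nonneg _))
          linarith [sum_adjMat_mul_adjMat_le G h.symm]
        · simp [adjMat, h]
    _ = _ := by simp_rw [mul_sum]

theorem eigenvalue_lapMat_le [DecidableEq V] {k t : ℕ} (hk : 1 < k) (hdeg : ∀ v, G.degree v ≤ k)
    (hloc : ∀ w, 2 * (t : ℝ) ≤ ∑ j, ∑ u, adjMat G w j * adjMat G j u * adjMat G u w +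
      2 * ((k : ℝ) - G.degree w) * ((k : ℝ) - 1))
    {μ : ℝ} {x : V → ℝ} (hx : x ≠ 0) (hμ : lapMat G *ᵥ x = μ • x) :
    μ ≤ 2 * (k : ℝ) - t / ((k : ℝ) - 1) := by
  set N := ∑ i, x i ^ 2
  set S := ∑ i, (G.degree i : ℝ) * x i ^ 2
  set P := ∑ i, ∑ j, adjMat G i j * (x i + x j) ^ 2
  have hk1 : (0 : ℝ) < k - 1 := by
    have : (1 : ℝ) < k := by exact_mod_cast hk
    linarith
  have hN : 0 < N := by
    obtain ⟨i, hi⟩ := Function.ne_iff.1 hx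
    exact sum_pos' (fun j _ => sq_nonneg (x j)) ⟨i, mem_univ i, sq_pos_of_ne_zero hi⟩
  have hS : S ≤ k * N := by
    rw [mul_sum]
    refine sum_le_sum fun i _ => mul_le_mul_of_nonneg_right ?_ (sq_nonneg _)
    exact_mod_cast hdeg i
  have hP : 2 * μ * N + P = 4 * S := by
    rw [two_mul_eigenvalue_mul_sum_sq G hμ, sum_adjMat_mul_sub_sq_add_sum_adjMat_mul_add_sq]
  have hT : 2 * t * N - 2 * (k - 1) * (k * N - S) ≤ (k - 1) * P :=
    calc 2 * t * N - 2 * (k - 1) * (k * N - S)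
        = ∑ i, (2 * (t : ℝ) - 2 * ((k : ℝ) - G.degree i) * ((k : ℝ) - 1)) * x i ^ 2 := by
          simp only [N, S, mul_sum, ← sum_sub_distrib]
          refine sum_congr rfl fun i _ => ?_
          ring
      _ ≤ ∑ i, (∑ j, ∑ u, adjMat G i j * adjMat G j u * adjMat G u i) * x i ^ 2 := by
          refine sum_le_sum fun i _ => mul_le_mul_of_nonneg_right ?_ (sq_nonneg _)
          linarith [hloc i]
      _ ≤ (k - 1) * P := sum_triangle_mul_sq_le G hdeg x
  have hμk : μ * (k - 1) * N ≤ (2 * k * (k - 1) - t) * N := by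
    nlinarith [mul_le_mul_of_nonneg_left hS hk1.le]
  have := le_of_mul_le_mul_right hμk hN
  rw [le_sub_comm, div_le_iff₀ hk1]
  linarith

end AdjacencyMatrix

/-- **Aharoni–Alon–Berger.** Let `G` have maximum degree at most `k` and no induced
`K_{1,ℓ}`, and let `t(k,ℓ)` be the minimum number of edges of a graph on `k` vertices
with no stable set of size `ℓ`. Then the largest Laplacian eigenvalue of `G` is at most
`2k - t(k,ℓ)/(k-1)`. -/
theorem stmt11 (k l : ℕ) (hk : 2 ≤ k) (hl : 2 ≤ l)
    {n : ℕ} (G : SimpleGraph (Fin n))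
    (hdeg : ∀ v, deg G v ≤ k)
    (hstar : IsEmpty (starG l ↪g G))
    (t : ℕ)
    (ht : t = sInf {m : ℕ | ∃ H : SimpleGraph (Fin k), H.edgeSet.ncard = m ∧
        ¬ ∃ s : Finset (Fin k), s.card = l ∧
          (∀ x ∈ s, ∀ y ∈ s, x ≠ y → ¬ H.Adj x y)}) :
    matMaxEig (lapMat G) ≤ 2 * (k : ℝ) - (t : ℝ) / ((k : ℝ) - 1) := by
  obtain rfl : t = minEdgesNoStableSet k l := ht
  have hdeg' : ∀ v, G.degree v ≤ k := fun v => deg_eq_degree G v ▸ hdeg v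
  have hloc : ∀ w, 2 * (minEdgesNoStableSet k l : ℝ) ≤
      ∑ j, ∑ u, adjMat G w j * adjMat G j u * adjMat G u w +
        2 * ((k : ℝ) - G.degree w) * ((k : ℝ) - 1) := fun w => by
    rw [sum_adjMat_triangle_eq]
    linarith [minEdgesNoStableSet_le_ncard_edgeSet_induce_neighborSet G hl hstar (hdeg' w)]
  -- the bound must be nonnegative, since `matMaxEig` of the empty graph is `sSup ∅ = 0`
  have hrhs : 0 ≤ 2 * (k : ℝ) - minEdgesNoStableSet k l / ((k : ℝ) - 1) := by
    have hk1 : (1 : ℝ) < k := by exact_mod_cast hk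
    have ht2 : (minEdgesNoStableSet k l : ℝ) ≤ k * (k - 1) / 2 := by
      rw [← Nat.cast_choose_two]
      exact_mod_cast minEdgesNoStableSet_le_choose_two hl
    rw [sub_nonneg, div_le_iff₀ (by linarith)]
    nlinarith
  refine Real.sSup_le ?_ hrhs
  rintro μ ⟨x, hx, hμ⟩
  exact eigenvalue_lapMat_le G hk hdeg' hloc hx hμ
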